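/- arXiv:2102.02691 — 8 statements merged into one kernel-verified Lean document; each statement's English description precedes it below -/
import Mathlib

section
/- In the HMC setting, the operator T preserves total mass: for every measurable h : 𝐐 → ℝ with h ≥ 0 and ∫_𝐐 h dμ < ∞, one has ∫_𝐐 (T h)(q) dμ(q) = ∫_𝐐 h(q) dμ(q). -/
open MeasureTheory

theorem MeasureTheory.MeasurePreserving.integral_integral_comp
    {α β γ E : Type*} [MeasurableSpace α] [MeasurableSpace β] [MeasurableSpace γ]
    [NormedAddCommGroup E] [NormedSpace ℝ E]
    {μ : Measure α} {ν : Measure β} {ρ : Measure γ} [SFinite μ] [SFinite ν]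
    {H : α × β → γ} (hH : MeasurePreserving H (μ.prod ν) ρ)
    {F : γ → E} (hF : Integrable F ρ) :
    ∫ q, ∫ p, F (H (q, p)) ∂ν ∂μ = ∫ y, F y ∂ρ := by
  have hF' : AEStronglyMeasurable F (Measure.map H (μ.prod ν)) :=
    hH.map_eq ▸ hF.aestronglyMeasurable
  calc ∫ q, ∫ p, F (H (q, p)) ∂ν ∂μ = ∫ x, F (H x) ∂(μ.prod ν) :=
        (integral_prod _ (hH.integrable_comp_of_integrable hF)).symm
    _ = ∫ y, F y ∂ρ := by rw [← hH.map_eq, integral_map hH.measurable.aemeasurable hF']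

theorem hmc_transfer_preserves_mass_general
    {α β : Type*} [MeasurableSpace α] [MeasurableSpace β]
    (μ : Measure α) (ν : Measure β) [SigmaFinite μ] [SigmaFinite ν]
    (g : β → ℝ)
    (hgI : ∫ p, g p ∂ν = 1)
    (H : α × β → α × β)
    (hHmp : MeasurePreserving H (μ.prod ν) (μ.prod ν))
    (h : α → ℝ)
    (hhint : Integrable h μ) :
    ∫ q, (∫ p, h (H (q, p)).1 * g (H (q, p)).2 ∂ν) ∂μ = ∫ q, h q ∂μ := by
  calc ∫ q, (∫ p, h (H (q, p)).1 * g (H (q, p)).2 ∂ν) ∂μ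
      = ∫ x : α × β, h x.1 * g x.2 ∂(μ.prod ν) :=
        hHmp.integral_integral_comp (hhint.mul_prod (integrable_of_integral_eq_one hgI))
    _ = (∫ q, h q ∂μ) * ∫ p, g p ∂ν := integral_prod_mul h g
    _ = ∫ q, h q ∂μ := by rw [hgI, mul_one]

/-- In the HMC setting, the transfer operator `T` preserves total mass:
for every measurable `h : 𝐐 → ℝ` with `h ≥ 0` and `∫ h dμ < ∞`,
`∫ (T h) dμ = ∫ h dμ`. -/
theorem hmc_transfer_preserves_mass
    {α β : Type*} [MeasurableSpace α] [MeasurableSpace β]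
    (μ : Measure α) (ν : Measure β) [SigmaFinite μ] [SigmaFinite ν]
    (f : α → ℝ) (hf : Measurable f) (hfpos : ∀ᵐ q ∂μ, 0 < f q)
    (hfint : Integrable f μ) (hfI : 0 < ∫ q, f q ∂μ)
    (g : β → ℝ) (hg : Measurable g) (hgnonneg : ∀ p, 0 ≤ g p)
    (hgI : ∫ p, g p ∂ν = 1)
    (H : α × β → α × β) (hHmeas : Measurable H) (hHbij : Function.Bijective H)
    (hHmp : MeasurePreserving H (μ.prod ν) (μ.prod ν))
    (hinv : ∀ᵐ x ∂(μ.prod ν), f (H x).1 * g (H x).2 = f x.1 * g x.2)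
    (h : α → ℝ) (hh : Measurable h) (hhnonneg : ∀ q, 0 ≤ h q)
    (hhint : Integrable h μ) :
    ∫ q, (∫ p, h (H (q, p)).1 * g (H (q, p)).2 ∂ν) ∂μ = ∫ q, h q ∂μ :=
  hmc_transfer_preserves_mass_general μ ν g hgI H hHmp h hhint
end

section
/- In the HMC setting, T is a contraction in the weighted L² norm: for every measurable h : 𝐐 → ℝ with h ≥ 0 and ‖h‖₂ < ∞ one has ‖T h‖₂ ≤ ‖h‖₂, i.e. ∫_𝐐 (T h)(q)² / f(q) dμ(q) ≤ ∫_𝐐 h(q)² / f(q) dμ(q). -/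
/-!
Write `|h| = f u`. Since `H` preserves `μ ⊗ ν` and the density `f ⊗ g`, one gets
`|(T h)(q)| ≤ f(q) ∫ u(Q(q,p)) g(p) dν(p)`, and Jensen's inequality for the probability density `g`
bounds `(T h)(q)² / f(q)` by `f(q) ∫ u(Q(q,p))² g(p) dν(p)`. Integrating in `q` and using the
invariance of `(f ⊗ g) · (μ ⊗ ν)` under `H` once more turns the right side into
`∫ u² f dμ = ∫ h² / f dμ`. Working with `ℝ≥0∞`-valued integrals avoids integrability conditions.
-/

open MeasureTheory
open scoped ENNReal

theorem sq_lintegral_le_lintegral_sq {β : Type*} [MeasurableSpace β] {ρ : Measure β}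
    [IsProbabilityMeasure ρ] {U : β → ℝ≥0∞} (hU : AEMeasurable U ρ) :
    (∫⁻ p, U p ∂ρ) ^ 2 ≤ ∫⁻ p, U p ^ 2 ∂ρ := by
  have h := eLpNorm_le_eLpNorm_of_exponent_le one_le_two hU.aestronglyMeasurable
  rw [eLpNorm_one_eq_lintegral_enorm,
    eLpNorm_eq_lintegral_rpow_enorm_toReal two_ne_zero ENNReal.ofNat_ne_top] at h
  simpa only [enorm_eq_self, ENNReal.toReal_ofNat, ENNReal.rpow_two, one_div,
    ENNReal.le_rpow_inv_iff two_pos] using h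

theorem sq_lintegral_mul_le_lintegral_sq_mul {β : Type*} [MeasurableSpace β] {ν : Measure β}
    {G : β → ℝ≥0∞} (hG : Measurable G) (hG1 : ∫⁻ p, G p ∂ν = 1) {U : β → ℝ≥0∞}
    (hU : Measurable U) :
    (∫⁻ p, U p * G p ∂ν) ^ 2 ≤ ∫⁻ p, U p ^ 2 * G p ∂ν := by
  have : IsProbabilityMeasure (ν.withDensity G) :=
    ⟨by rw [withDensity_apply _ MeasurableSet.univ, setLIntegral_univ, hG1]⟩
  have h := sq_lintegral_le_lintegral_sq (ρ := ν.withDensity G) hU.aemeasurable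
  rw [lintegral_withDensity_eq_lintegral_mul _ hG hU,
    lintegral_withDensity_eq_lintegral_mul _ hG (hU.pow_const 2)] at h
  simpa only [Pi.mul_apply, mul_comm (G _)] using h

section Transfer

variable {α β : Type*} [MeasurableSpace α] [MeasurableSpace β] {μ : Measure α} {ν : Measure β}
  {F : α → ℝ≥0∞} {G : β → ℝ≥0∞} {H : α × β → α × β}

theorem MeasureTheory.MeasurePreserving.lintegral_fst_comp_mul_density [SFinite ν]
    (hH : MeasurePreserving H (μ.prod ν) (μ.prod ν)) (hF : Measurable F) (hG : Measurable G)
    (hinv : ∀ᵐ x ∂μ.prod ν, F (H x).1 * G (H x).2 = F x.1 * G x.2)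
    {φ : α → ℝ≥0∞} (hφ : Measurable φ) :
    ∫⁻ x, φ (H x).1 * (F x.1 * G x.2) ∂μ.prod ν = (∫⁻ q, φ q * F q ∂μ) * ∫⁻ p, G p ∂ν := by
  calc ∫⁻ x, φ (H x).1 * (F x.1 * G x.2) ∂μ.prod ν
      = ∫⁻ x, φ (H x).1 * (F (H x).1 * G (H x).2) ∂μ.prod ν :=
        lintegral_congr_ae (hinv.mono fun x hx => by simp only [hx])
    _ = ∫⁻ x, φ x.1 * F x.1 * G x.2 ∂μ.prod ν := by
        simp only [← mul_assoc]
        exact hH.lintegral_comp (f := fun x => φ x.1 * F x.1 * G x.2) (by fun_prop)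
    _ = (∫⁻ q, φ q * F q ∂μ) * ∫⁻ p, G p ∂ν :=
        lintegral_prod_mul (hφ.mul hF).aemeasurable hG.aemeasurable

theorem lintegral_mul_sq_lintegral_comp_le [SFinite μ] [SFinite ν]
    (hH : MeasurePreserving H (μ.prod ν) (μ.prod ν)) (hF : Measurable F) (hG : Measurable G)
    (hG1 : ∫⁻ p, G p ∂ν = 1) (hinv : ∀ᵐ x ∂μ.prod ν, F (H x).1 * G (H x).2 = F x.1 * G x.2)
    {u : α → ℝ≥0∞} (hu : Measurable u) :
    ∫⁻ q, F q * (∫⁻ p, u (H (q, p)).1 * G p ∂ν) ^ 2 ∂μ ≤ ∫⁻ q, F q * u q ^ 2 ∂μ := by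
  have huH : Measurable fun x => u (H x).1 := hu.comp (measurable_fst.comp hH.measurable)
  calc ∫⁻ q, F q * (∫⁻ p, u (H (q, p)).1 * G p ∂ν) ^ 2 ∂μ
      ≤ ∫⁻ q, F q * ∫⁻ p, u (H (q, p)).1 ^ 2 * G p ∂ν ∂μ := by
        gcongr with q
        exact sq_lintegral_mul_le_lintegral_sq_mul hG hG1 (huH.comp measurable_prodMk_left)
    _ = ∫⁻ x, u (H x).1 ^ 2 * (F x.1 * G x.2) ∂μ.prod ν := by
        rw [lintegral_prod (fun x => u (H x).1 ^ 2 * (F x.1 * G x.2)) ((huH.pow_const 2).mul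
          ((hF.comp measurable_fst).mul (hG.comp measurable_snd))).aemeasurable]
        refine lintegral_congr fun q => ?_
        have hmeas : Measurable fun p => u (H (q, p)).1 ^ 2 * G p :=
          ((huH.comp measurable_prodMk_left).pow_const 2).mul hG
        rw [← lintegral_const_mul _ hmeas]
        exact lintegral_congr fun p => by ring
    _ = ∫⁻ q, F q * u q ^ 2 ∂μ := by
        rw [hH.lintegral_fst_comp_mul_density hF hG hinv (hu.pow_const 2), hG1, mul_one]
        exact lintegral_congr fun q => mul_comm _ _

end Transfer

theorem ofReal_sq_integral_div_le {β : Type*} [MeasurableSpace β] {ν : Measure β} {φ : β → ℝ}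
    {c : ℝ} (hc : 0 < c) {w : β → ℝ≥0∞} (hφ : ∀ᵐ p ∂ν, ‖φ p‖ₑ = ENNReal.ofReal c * w p) :
    ENNReal.ofReal ((∫ p, φ p ∂ν) ^ 2 / c) ≤ ENNReal.ofReal c * (∫⁻ p, w p ∂ν) ^ 2 := by
  have hI : ‖∫ p, φ p ∂ν‖ₑ ≤ ENNReal.ofReal c * ∫⁻ p, w p ∂ν := by
    rw [← lintegral_const_mul' _ _ ENNReal.ofReal_ne_top, ← lintegral_congr_ae hφ]
    exact enorm_integral_le_lintegral_enorm φ
  rw [ENNReal.ofReal_div_of_pos hc, ← sq_abs, ENNReal.ofReal_pow (abs_nonneg _),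
    ← Real.enorm_eq_ofReal_abs, ENNReal.div_le_iff (by simpa using hc) ENNReal.ofReal_ne_top]
  calc ‖∫ p, φ p ∂ν‖ₑ ^ 2 ≤ (ENNReal.ofReal c * ∫⁻ p, w p ∂ν) ^ 2 := by gcongr
    _ = ENNReal.ofReal c * (∫⁻ p, w p ∂ν) ^ 2 * ENNReal.ofReal c := by ring

theorem hmc_transfer_contraction_general
    {α β : Type*} [MeasurableSpace α] [MeasurableSpace β]
    (μ : Measure α) (ν : Measure β) [SigmaFinite μ] [SigmaFinite ν]
    (f : α → ℝ) (hf : Measurable f) (hfpos : ∀ᵐ q ∂μ, 0 < f q)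
    (g : β → ℝ) (hg : Measurable g) (hgnonneg : ∀ p, 0 ≤ g p)
    (hgI : ∫ p, g p ∂ν = 1)
    (H : α × β → α × β)
    (hHmp : MeasurePreserving H (μ.prod ν) (μ.prod ν))
    (hinv : ∀ᵐ x ∂(μ.prod ν), f (H x).1 * g (H x).2 = f x.1 * g x.2)
    (h : α → ℝ) (hh : Measurable h) :
    ∫⁻ q, ENNReal.ofReal ((∫ p, h (H (q, p)).1 * g (H (q, p)).2 ∂ν) ^ 2 / f q) ∂μ
      ≤ ∫⁻ q, ENNReal.ofReal (h q ^ 2 / f q) ∂μ := by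
  set F : α → ℝ≥0∞ := fun q => ENNReal.ofReal (f q)
  set G : β → ℝ≥0∞ := fun p => ENNReal.ofReal (g p)
  set u : α → ℝ≥0∞ := fun q => ENNReal.ofReal (|h q| / f q)
  have hG1 : ∫⁻ p, G p ∂ν = 1 := by
    rw [← ofReal_integral_eq_lintegral_ofReal (.of_integral_ne_zero (by simp [hgI]))
      (.of_forall hgnonneg), hgI, ENNReal.ofReal_one]
  have hinvF : ∀ᵐ x ∂μ.prod ν, F (H x).1 * G (H x).2 = F x.1 * G x.2 :=
    hinv.mono fun x hx => by simp only [F, G, ← ENNReal.ofReal_mul' (hgnonneg _), hx]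
  have hfH : ∀ᵐ x ∂μ.prod ν, 0 < f (H x).1 :=
    hHmp.quasiMeasurePreserving.ae (Measure.quasiMeasurePreserving_fst.ae hfpos)
  have hfactor : ∀ᵐ x ∂μ.prod ν, ‖h (H x).1 * g (H x).2‖ₑ = F x.1 * (u (H x).1 * G x.2) := by
    filter_upwards [hinvF, hfH] with x hx hfx
    have hhF : ENNReal.ofReal |h (H x).1| = F (H x).1 * u (H x).1 := by
      rw [← ENNReal.ofReal_mul hfx.le, mul_div_cancel₀ _ hfx.ne']
    rw [enorm_mul, Real.enorm_eq_ofReal_abs, Real.enorm_of_nonneg (hgnonneg _), hhF]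
    calc F (H x).1 * u (H x).1 * G (H x).2 = u (H x).1 * (F (H x).1 * G (H x).2) := by ring
      _ = F x.1 * (u (H x).1 * G x.2) := by rw [hx]; ring
  calc _ ≤ ∫⁻ q, F q * (∫⁻ p, u (H (q, p)).1 * G p ∂ν) ^ 2 ∂μ :=
        lintegral_mono_ae <| (hfpos.and (Measure.ae_ae_of_ae_prod hfactor)).mono
          fun q hq => ofReal_sq_integral_div_le hq.1 hq.2
    _ ≤ ∫⁻ q, F q * u q ^ 2 ∂μ :=
        lintegral_mul_sq_lintegral_comp_le hHmp hf.ennreal_ofReal hg.ennreal_ofReal hG1 hinvF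
          (hh.abs.div hf).ennreal_ofReal
    _ = _ := lintegral_congr_ae <| hfpos.mono fun q hq => by
        change ENNReal.ofReal (f q) * ENNReal.ofReal (|h q| / f q) ^ 2 = _
        rw [← ENNReal.ofReal_pow (by positivity), ← ENNReal.ofReal_mul hq.le, div_pow, sq_abs]
        field_simp

/-- In the HMC setting, `T` is a contraction in the weighted `L²` norm:
for every measurable `h ≥ 0` with `‖h‖₂ < ∞`,
`∫ (T h)²/f dμ ≤ ∫ h²/f dμ`. -/
theorem hmc_transfer_contraction
    {α β : Type*} [MeasurableSpace α] [MeasurableSpace β]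
    (μ : Measure α) (ν : Measure β) [SigmaFinite μ] [SigmaFinite ν]
    (f : α → ℝ) (hf : Measurable f) (hfpos : ∀ᵐ q ∂μ, 0 < f q)
    (hfint : Integrable f μ) (hfI : 0 < ∫ q, f q ∂μ)
    (g : β → ℝ) (hg : Measurable g) (hgnonneg : ∀ p, 0 ≤ g p)
    (hgI : ∫ p, g p ∂ν = 1)
    (H : α × β → α × β) (hHmeas : Measurable H) (hHbij : Function.Bijective H)
    (hHmp : MeasurePreserving H (μ.prod ν) (μ.prod ν))
    (hinv : ∀ᵐ x ∂(μ.prod ν), f (H x).1 * g (H x).2 = f x.1 * g x.2)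
    (h : α → ℝ) (hh : Measurable h) (hhnonneg : ∀ q, 0 ≤ h q)
    (hhL2 : ∫⁻ q, ENNReal.ofReal (h q ^ 2 / f q) ∂μ < ⊤) :
    ∫⁻ q, ENNReal.ofReal ((∫ p, h (H (q, p)).1 * g (H (q, p)).2 ∂ν) ^ 2 / f q) ∂μ
      ≤ ∫⁻ q, ENNReal.ofReal (h q ^ 2 / f q) ∂μ :=
  hmc_transfer_contraction_general μ ν f hf hfpos g hg hgnonneg hgI H hHmp hinv h hh
end

section
/- In the HMC setting, if a measurable h : 𝐐 → ℝ with h ≥ 0 and ‖h‖₂ < ∞ satisfies ‖T h‖₂ = ‖h‖₂, then for μ-a.e. q the function p ↦ (h/f)(Q(q,p)) is equal, (g dν)-a.e. in p, to a constant (depending on q). -/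
/-!
Write `π = g dν` and `φ(q, p) = (h / f)(Q(q, p))`. The invariance `f(Q) g(P) = f g` turns the
transfer operator into `T h = f · E_π[φ(q, ·)]`, so `‖T h‖₂² = ∫ f (E_π φ)² dμ`, while Tonelli and
the `H`-invariance of `μ ⊗ ν` give `‖h‖₂² = ∫ f E_π[φ²] dμ`. Since `(E_π φ)² ≤ E_π[φ²]` with
defect the variance, equality of these finite integrals makes the variance of `φ(q, ·)` under `π`
vanish for a.e. `q`.
-/

open MeasureTheory Filter ProbabilityTheory
open scoped ENNReal

section SecondMoment

variable {Ω : Type*} [MeasurableSpace Ω] {P : Measure Ω} [IsProbabilityMeasure P] {X : Ω → ℝ}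

theorem lintegral_ofReal_sq_eq_evariance_add (hX : AEStronglyMeasurable X P) :
    ∫⁻ ω, ENNReal.ofReal (X ω ^ 2) ∂P = evariance X P + ENNReal.ofReal ((∫ ω, X ω ∂P) ^ 2) := by
  by_cases hL2 : MemLp X 2 P
  · rw [← ofReal_variance hL2, ← ENNReal.ofReal_add (variance_nonneg X P) (sq_nonneg _),
      variance_eq_sub hL2, sub_add_cancel, ← ofReal_integral_eq_lintegral_ofReal hL2.integrable_sq
        (.of_forall fun _ => sq_nonneg _)]
    rfl
  · have hsub := evariance_def' hX
    rw [evariance_eq_top hX hL2, eq_comm, ENNReal.sub_eq_top_iff] at hsub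
    rw [evariance_eq_top hX hL2, top_add]
    simpa only [← enorm_pow, Real.enorm_of_nonneg (sq_nonneg _)] using hsub.1

theorem ofReal_sq_integral_le_lintegral_sq (hX : AEStronglyMeasurable X P) :
    ENNReal.ofReal ((∫ ω, X ω ∂P) ^ 2) ≤ ∫⁻ ω, ENNReal.ofReal (X ω ^ 2) ∂P := by
  rw [lintegral_ofReal_sq_eq_evariance_add hX]
  exact le_add_self

theorem ae_eq_integral_of_lintegral_sq_eq (hX : AEStronglyMeasurable X P)
    (hsq : ∫⁻ ω, ENNReal.ofReal (X ω ^ 2) ∂P = ENNReal.ofReal ((∫ ω, X ω ∂P) ^ 2)) :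
    X =ᵐ[P] fun _ => ∫ ω, X ω ∂P := by
  rw [lintegral_ofReal_sq_eq_evariance_add hX] at hsq
  refine (evariance_eq_zero_iff hX.aemeasurable).1 ?_
  exact (ENNReal.add_left_inj ENNReal.ofReal_ne_top).1 (hsq.trans (zero_add _).symm)

end SecondMoment

theorem ae_ae_eq_integral_of_lintegral_mul_sq_eq {α β : Type*} [MeasurableSpace α]
    [MeasurableSpace β] {μ : Measure α} {π : Measure β} [IsProbabilityMeasure π]
    {w : α → ℝ≥0∞} {Φ : α × β → ℝ} (hw : Measurable w) (hw0 : ∀ᵐ q ∂μ, w q ≠ 0)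
    (hwtop : ∀ᵐ q ∂μ, w q ≠ ⊤) (hΦ : Measurable Φ)
    (hfin : ∫⁻ q, w q * ∫⁻ p, ENNReal.ofReal (Φ (q, p) ^ 2) ∂π ∂μ ≠ ⊤)
    (heq : ∫⁻ q, w q * ENNReal.ofReal ((∫ p, Φ (q, p) ∂π) ^ 2) ∂μ
      = ∫⁻ q, w q * ∫⁻ p, ENNReal.ofReal (Φ (q, p) ^ 2) ∂π ∂μ) :
    ∀ᵐ q ∂μ, (fun p => Φ (q, p)) =ᵐ[π] fun _ => ∫ p, Φ (q, p) ∂π := by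
  have hΦq (q : α) : AEStronglyMeasurable (fun p => Φ (q, p)) π :=
    (hΦ.comp measurable_prodMk_left).aestronglyMeasurable
  have hle : (fun q => w q * ENNReal.ofReal ((∫ p, Φ (q, p) ∂π) ^ 2))
      ≤ᵐ[μ] fun q => w q * ∫⁻ p, ENNReal.ofReal (Φ (q, p) ^ 2) ∂π :=
    .of_forall fun q => mul_le_mul_right (ofReal_sq_integral_le_lintegral_sq (hΦq q)) _
  have hS : Measurable fun q => ∫⁻ p, ENNReal.ofReal (Φ (q, p) ^ 2) ∂π :=
    (hΦ.pow_const 2).ennreal_ofReal.lintegral_prod_right'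
  have hae := ae_eq_of_ae_le_of_lintegral_le hle (heq ▸ hfin) (hw.mul hS).aemeasurable heq.ge
  filter_upwards [hae, hw0, hwtop] with q hq hq0 hqtop
  exact ae_eq_integral_of_lintegral_sq_eq (hΦq q) ((ENNReal.mul_right_inj hq0 hqtop).1 hq).symm

theorem lintegral_ofReal_eq_one_of_integral_eq_one {β : Type*} [MeasurableSpace β]
    {ν : Measure β} {g : β → ℝ} (hg0 : 0 ≤ᵐ[ν] g) (hg1 : ∫ p, g p ∂ν = 1) :
    ∫⁻ p, ENNReal.ofReal (g p) ∂ν = 1 := by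
  have hint : Integrable g ν := Integrable.of_integral_ne_zero (by rw [hg1]; exact one_ne_zero)
  rw [← ofReal_integral_eq_lintegral_ofReal hint hg0, hg1, ENNReal.ofReal_one]

theorem isProbabilityMeasure_withDensity_ofReal {β : Type*} [MeasurableSpace β]
    {ν : Measure β} {g : β → ℝ} (hg0 : 0 ≤ᵐ[ν] g) (hg1 : ∫ p, g p ∂ν = 1) :
    IsProbabilityMeasure (ν.withDensity fun p => ENNReal.ofReal (g p)) :=
  ⟨by rw [withDensity_apply _ .univ, setLIntegral_univ,
    lintegral_ofReal_eq_one_of_integral_eq_one hg0 hg1]⟩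

section Transfer

variable {α β : Type*} [MeasurableSpace α] [MeasurableSpace β] {μ : Measure α} {ν : Measure β}
  {f : α → ℝ} {g : β → ℝ} {H : α × β → α × β}

theorem ae_comp_mul_eq_div_comp_mul (hfpos : ∀ᵐ q ∂μ, 0 < f q)
    (hH : Measure.QuasiMeasurePreserving H (μ.prod ν) (μ.prod ν))
    (hinv : ∀ᵐ x ∂(μ.prod ν), f (H x).1 * g (H x).2 = f x.1 * g x.2) (k : α → ℝ) :
    ∀ᵐ x ∂(μ.prod ν), k (H x).1 * g (H x).2 = k (H x).1 / f (H x).1 * (f x.1 * g x.2) := by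
  filter_upwards [hH.ae (Measure.quasiMeasurePreserving_fst.ae hfpos), hinv] with x hQ hx
  rw [← hx]
  field_simp

variable [SFinite ν]

theorem ae_integral_comp_mul_eq_mul_integral_withDensity (hfpos : ∀ᵐ q ∂μ, 0 < f q)
    (hH : Measure.QuasiMeasurePreserving H (μ.prod ν) (μ.prod ν))
    (hinv : ∀ᵐ x ∂(μ.prod ν), f (H x).1 * g (H x).2 = f x.1 * g x.2)
    (hg : Measurable g) (hg0 : ∀ p, 0 ≤ g p) (k : α → ℝ) :
    ∀ᵐ q ∂μ, ∫ p, k (H (q, p)).1 * g (H (q, p)).2 ∂ν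
      = f q * ∫ p, k (H (q, p)).1 / f (H (q, p)).1
          ∂ν.withDensity fun p => ENNReal.ofReal (g p) := by
  filter_upwards [Measure.ae_ae_of_ae_prod (ae_comp_mul_eq_div_comp_mul hfpos hH hinv k)]
    with q hq
  rw [integral_congr_ae hq, integral_withDensity_eq_integral_toReal_smul hg.ennreal_ofReal
    (.of_forall fun _ => ENNReal.ofReal_lt_top), ← integral_const_mul]
  congr with p
  rw [ENNReal.toReal_ofReal (hg0 p), smul_eq_mul]
  ring

theorem lintegral_sq_integral_comp_mul_div_eq (hfpos : ∀ᵐ q ∂μ, 0 < f q)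
    (hH : Measure.QuasiMeasurePreserving H (μ.prod ν) (μ.prod ν))
    (hinv : ∀ᵐ x ∂(μ.prod ν), f (H x).1 * g (H x).2 = f x.1 * g x.2)
    (hg : Measurable g) (hg0 : ∀ p, 0 ≤ g p) (k : α → ℝ) :
    ∫⁻ q, ENNReal.ofReal ((∫ p, k (H (q, p)).1 * g (H (q, p)).2 ∂ν) ^ 2 / f q) ∂μ
      = ∫⁻ q, ENNReal.ofReal (f q) * ENNReal.ofReal
          ((∫ p, k (H (q, p)).1 / f (H (q, p)).1 ∂ν.withDensity fun p => ENNReal.ofReal (g p)) ^ 2)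
        ∂μ := by
  refine lintegral_congr_ae ?_
  filter_upwards [hfpos, ae_integral_comp_mul_eq_mul_integral_withDensity hfpos hH hinv hg hg0 k]
    with q hq hT
  rw [hT, ← ENNReal.ofReal_mul hq.le]
  congr 1
  field_simp

theorem lintegral_mul_lintegral_sq_withDensity_eq (hf : Measurable f) (hfpos : ∀ᵐ q ∂μ, 0 < f q)
    (hg : Measurable g) (hg0 : ∀ p, 0 ≤ g p) (hg1 : ∫⁻ p, ENNReal.ofReal (g p) ∂ν = 1)
    (hH : MeasurePreserving H (μ.prod ν) (μ.prod ν))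
    (hinv : ∀ᵐ x ∂(μ.prod ν), f (H x).1 * g (H x).2 = f x.1 * g x.2)
    {k : α → ℝ} (hk : Measurable k) :
    ∫⁻ q, ENNReal.ofReal (f q) * ∫⁻ p, ENNReal.ofReal ((k (H (q, p)).1 / f (H (q, p)).1) ^ 2)
        ∂ν.withDensity fun p => ENNReal.ofReal (g p) ∂μ
      = ∫⁻ q, ENNReal.ofReal (k q ^ 2 / f q) ∂μ := by
  have hHm := hH.measurable
  calc _ = ∫⁻ q, ∫⁻ p, ENNReal.ofReal (f q) * (ENNReal.ofReal (g p) *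
          ENNReal.ofReal ((k (H (q, p)).1 / f (H (q, p)).1) ^ 2)) ∂ν ∂μ := by
        refine lintegral_congr fun q => ?_
        rw [lintegral_withDensity_eq_lintegral_mul _ hg.ennreal_ofReal (by fun_prop),
          ← lintegral_const_mul _ (by fun_prop)]
        rfl
    _ = ∫⁻ x, ENNReal.ofReal (f x.1) * (ENNReal.ofReal (g x.2) *
          ENNReal.ofReal ((k (H x).1 / f (H x).1) ^ 2)) ∂(μ.prod ν) := by
        rw [lintegral_prod _ (by fun_prop)]
    _ = ∫⁻ x, ENNReal.ofReal (k (H x).1 ^ 2 / f (H x).1 * g (H x).2) ∂(μ.prod ν) := by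
        refine lintegral_congr_ae ?_
        filter_upwards [ae_comp_mul_eq_div_comp_mul hfpos hH.quasiMeasurePreserving hinv
          fun q => k q ^ 2 / f q] with x hx
        rw [hx, div_div, ← sq, ← div_pow, ENNReal.ofReal_mul (sq_nonneg _),
          ENNReal.ofReal_mul' (hg0 _)]
        ring
    _ = ∫⁻ x, ENNReal.ofReal (k x.1 ^ 2 / f x.1 * g x.2) ∂(μ.prod ν) :=
        hH.lintegral_comp (f := fun x : α × β => ENNReal.ofReal (k x.1 ^ 2 / f x.1 * g x.2))
          (by fun_prop)
    _ = ∫⁻ q, ENNReal.ofReal (k q ^ 2 / f q) ∂μ := by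
        simp_rw [ENNReal.ofReal_mul' (hg0 _)]
        rw [lintegral_prod_mul (f := fun q => ENNReal.ofReal (k q ^ 2 / f q))
          (g := fun p => ENNReal.ofReal (g p)) (by fun_prop) (by fun_prop), hg1, mul_one]

end Transfer

theorem hmc_transfer_norm_equality_implies_constant_fibers_general
    {α β : Type*} [MeasurableSpace α] [MeasurableSpace β]
    (μ : Measure α) (ν : Measure β) [SigmaFinite ν]
    (f : α → ℝ) (hf : Measurable f) (hfpos : ∀ᵐ q ∂μ, 0 < f q)
    (g : β → ℝ) (hg : Measurable g) (hgnonneg : ∀ p, 0 ≤ g p)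
    (hgI : ∫ p, g p ∂ν = 1)
    (H : α × β → α × β)
    (hHmp : MeasurePreserving H (μ.prod ν) (μ.prod ν))
    (hinv : ∀ᵐ x ∂(μ.prod ν), f (H x).1 * g (H x).2 = f x.1 * g x.2)
    (h : α → ℝ) (hh : Measurable h)
    (hhL2 : ∫⁻ q, ENNReal.ofReal (h q ^ 2 / f q) ∂μ < ⊤)
    (heq : ∫⁻ q, ENNReal.ofReal ((∫ p, h (H (q, p)).1 * g (H (q, p)).2 ∂ν) ^ 2 / f q) ∂μ
      = ∫⁻ q, ENNReal.ofReal (h q ^ 2 / f q) ∂μ) :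
    ∀ᵐ q ∂μ, ∃ c : ℝ,
      (fun p => h (H (q, p)).1 / f (H (q, p)).1)
        =ᵐ[ν.withDensity (fun p => ENNReal.ofReal (g p))] (fun _ => c) := by
  have := isProbabilityMeasure_withDensity_ofReal (.of_forall hgnonneg) hgI
  have hHm := hHmp.measurable
  have hnorm := lintegral_mul_lintegral_sq_withDensity_eq hf hfpos hg hgnonneg
    (lintegral_ofReal_eq_one_of_integral_eq_one (.of_forall hgnonneg) hgI) hHmp hinv hh
  have hfibers := ae_ae_eq_integral_of_lintegral_mul_sq_eq (Φ := fun x => h (H x).1 / f (H x).1)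
    hf.ennreal_ofReal (hfpos.mono fun _ hq => (ENNReal.ofReal_pos.2 hq).ne')
    (.of_forall fun _ => ENNReal.ofReal_ne_top) (by fun_prop) (hnorm ▸ hhL2.ne) (by
      rw [← lintegral_sq_integral_comp_mul_div_eq hfpos hHmp.quasiMeasurePreserving hinv hg
        hgnonneg, heq, hnorm])
  exact hfibers.mono fun q hq => ⟨_, hq⟩

/-- In the HMC setting, if a measurable `h ≥ 0` with `‖h‖₂ < ∞`
satisfies `‖T h‖₂ = ‖h‖₂`, then for `μ`-a.e. `q` the function `p ↦ (h/f)(Q(q,p))` is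
equal, `(g dν)`-a.e. in `p`, to a constant (depending on `q`). -/
theorem hmc_transfer_norm_equality_implies_constant_fibers
    {α β : Type*} [MeasurableSpace α] [MeasurableSpace β]
    (μ : Measure α) (ν : Measure β) [SigmaFinite μ] [SigmaFinite ν]
    (f : α → ℝ) (hf : Measurable f) (hfpos : ∀ᵐ q ∂μ, 0 < f q)
    (hfint : Integrable f μ) (hfI : 0 < ∫ q, f q ∂μ)
    (g : β → ℝ) (hg : Measurable g) (hgnonneg : ∀ p, 0 ≤ g p)
    (hgI : ∫ p, g p ∂ν = 1)
    (H : α × β → α × β) (hHmeas : Measurable H) (hHbij : Function.Bijective H)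
    (hHmp : MeasurePreserving H (μ.prod ν) (μ.prod ν))
    (hinv : ∀ᵐ x ∂(μ.prod ν), f (H x).1 * g (H x).2 = f x.1 * g x.2)
    (h : α → ℝ) (hh : Measurable h) (hhnonneg : ∀ q, 0 ≤ h q)
    (hhL2 : ∫⁻ q, ENNReal.ofReal (h q ^ 2 / f q) ∂μ < ⊤)
    (heq : ∫⁻ q, ENNReal.ofReal ((∫ p, h (H (q, p)).1 * g (H (q, p)).2 ∂ν) ^ 2 / f q) ∂μ
      = ∫⁻ q, ENNReal.ofReal (h q ^ 2 / f q) ∂μ) :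
    ∀ᵐ q ∂μ, ∃ c : ℝ,
      (fun p => h (H (q, p)).1 / f (H (q, p)).1)
        =ᵐ[ν.withDensity (fun p => ENNReal.ofReal (g p))] (fun _ => c) :=
  hmc_transfer_norm_equality_implies_constant_fibers_general μ ν f hf hfpos g hg hgnonneg hgI H hHmp
    hinv h hh hhL2 heq
end

section
/- In the HMC setting, the target density f is a fixed point of the transfer operator: (T f)(q) = f(q) for μ-a.e. q. -/
open MeasureTheory Filter Topology

theorem ae_integral_eq_mul_integral_of_ae_prod_eq {α β : Type*} [MeasurableSpace α]
    [MeasurableSpace β] {μ : Measure α} {ν : Measure β} [SFinite ν] {F : α × β → ℝ}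
    {f : α → ℝ} {g : β → ℝ} (h : ∀ᵐ x ∂μ.prod ν, F x = f x.1 * g x.2) :
    ∀ᵐ q ∂μ, ∫ p, F (q, p) ∂ν = f q * ∫ p, g p ∂ν := by
  filter_upwards [Measure.ae_ae_of_ae_prod h] with q hq
  rw [integral_congr_ae hq, integral_const_mul]

theorem hmc_target_is_fixed_point_general
    {α β : Type*} [MeasurableSpace α] [MeasurableSpace β]
    (μ : Measure α) (ν : Measure β) [SigmaFinite ν]
    (f : α → ℝ)
    (g : β → ℝ)
    (hgI : ∫ p, g p ∂ν = 1)
    (H : α × β → α × β)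
    (hinv : ∀ᵐ x ∂(μ.prod ν), f (H x).1 * g (H x).2 = f x.1 * g x.2) :
    ∀ᵐ q ∂μ, (∫ p, f (H (q, p)).1 * g (H (q, p)).2 ∂ν) = f q := by
  filter_upwards [ae_integral_eq_mul_integral_of_ae_prod_eq hinv] with q hq
  rw [hq, hgI, mul_one]

/-- In the HMC setting, the target density `f` is a fixed point of the
transfer operator: `(T f)(q) = f(q)` for `μ`-a.e. `q`. -/
theorem hmc_target_is_fixed_point
    {α β : Type*} [MeasurableSpace α] [MeasurableSpace β]
    (μ : Measure α) (ν : Measure β) [SigmaFinite μ] [SigmaFinite ν]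
    (f : α → ℝ) (hf : Measurable f) (hfpos : ∀ᵐ q ∂μ, 0 < f q)
    (hfint : Integrable f μ) (hfI : 0 < ∫ q, f q ∂μ)
    (g : β → ℝ) (hg : Measurable g) (hgnonneg : ∀ p, 0 ≤ g p)
    (hgI : ∫ p, g p ∂ν = 1)
    (H : α × β → α × β) (hHmeas : Measurable H) (hHbij : Function.Bijective H)
    (hHmp : MeasurePreserving H (μ.prod ν) (μ.prod ν))
    (hinv : ∀ᵐ x ∂(μ.prod ν), f (H x).1 * g (H x).2 = f x.1 * g x.2) :
    ∀ᵐ q ∂μ, (∫ p, f (H (q, p)).1 * g (H (q, p)).2 ∂ν) = f q :=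
  hmc_target_is_fixed_point_general μ ν f g hgI H hinv
end

section
/- In the HMC setting, let T† be the operator defined by the inverse motion: (T† h)(q) = ∫_𝐏 h(Q⁻(q,p)) · g(P⁻(q,p)) dν(p), where H⁻¹(q,p) = (Q⁻(q,p), P⁻(q,p)). Then T† is adjoint to T with respect to the weighted inner product: for all measurable h, k : 𝐐 → ℝ with ‖h‖₂ < ∞ and ‖k‖₂ < ∞, one has ⟨T h, k⟩ = ⟨h, T† k⟩. -/
open MeasureTheory Filter Topology

/-!
Both sides are integrals over `𝐐 × 𝐏` of the same kernel, read through `H`: writing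
`x = (q, p)`, the left side is `∫ h(Q x) g(P x) k(q) / f(q)` and the right side, after the
measure-preserving substitution `x ↦ H x`, is `∫ k(q) g(p) h(Q x) / f(Q x)`. The two integrands
agree pointwise because `g(P x) / f(q) = g(p) / f(Q x)` is the invariance `f(Q) g(P) = f(q) g(p)`.
The same invariance and AM-GM bound the integrand by `h(Q)² g(P) / f(Q) + k(q)² g(p) / f(q)`,
which is integrable since `H` preserves `μ ⊗ ν` and `∫ g = 1`; this justifies Fubini.
-/

lemma mul_mul_div_eq_of_mul_eq {u v a A b B : ℝ} (ha : 0 < a) (hA : 0 < A)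
    (hAB : A * B = a * b) : u * B * (v / a) = v * b * (u / A) := by
  field_simp
  linear_combination u * v * hAB

lemma abs_mul_mul_div_le_of_mul_eq {u v a A b B : ℝ} (ha : 0 < a) (hA : 0 < A)
    (hB : 0 ≤ B) (hAB : A * B = a * b) :
    |u * B * (v / a)| ≤ u ^ 2 / A * B + v ^ 2 / a * b := by
  have habs : |u * B * (v / a)| = |u| * |v| * B / a := by
    rw [abs_mul, abs_mul, abs_div, abs_of_nonneg hB, abs_of_pos ha]; ring
  have hb : b = A * B / a := by field_simp; linarith
  have hsq : |u| ^ 2 / A * B + |v| ^ 2 / a * b - 2 * (|u| * |v| * B / a)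
      = B / (A * a ^ 2) * (|u| * a - |v| * A) ^ 2 := by
    rw [hb]; field_simp; ring
  rw [habs, ← sq_abs u, ← sq_abs v]
  linarith [show 0 ≤ B / (A * a ^ 2) * (|u| * a - |v| * A) ^ 2 by positivity,
    show 0 ≤ |u| * |v| * B / a by positivity]

section

variable {α β : Type*} [MeasurableSpace α] [MeasurableSpace β] {μ : Measure α} {ν : Measure β}

lemma integral_prod_mul_fst [SFinite μ] [SFinite ν] {φ : α × β → ℝ} {c : α → ℝ}
    (hφc : Integrable (fun x => φ x * c x.1) (μ.prod ν)) :
    ∫ x, φ x * c x.1 ∂(μ.prod ν) = ∫ q, (∫ p, φ (q, p) ∂ν) * c q ∂μ := by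
  rw [integral_prod _ hφc]
  simp_rw [integral_mul_const]

lemma integrable_sq_div_mul_prod {f w : α → ℝ} {g : β → ℝ} (hf : Measurable f)
    (hfpos : ∀ᵐ q ∂μ, 0 < f q) (hw : Measurable w)
    (hwL2 : ∫⁻ q, ENNReal.ofReal (w q ^ 2 / f q) ∂μ < ⊤) (hg : Integrable g ν) :
    Integrable (fun x : α × β => w x.1 ^ 2 / f x.1 * g x.2) (μ.prod ν) := by
  have hnonneg : 0 ≤ᵐ[μ] fun q => w q ^ 2 / f q := by
    filter_upwards [hfpos] with q hq using div_nonneg (sq_nonneg _) hq.le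
  have hsq : Integrable (fun q => w q ^ 2 / f q) μ :=
    ⟨(by fun_prop : Measurable _).aestronglyMeasurable,
      (hasFiniteIntegral_iff_ofReal hnonneg).2 hwL2⟩
  exact hsq.mul_prod hg

lemma integrable_transfer_integrand [SFinite μ] [SFinite ν] {f h k : α → ℝ} {g : β → ℝ}
    {H : α × β → α × β} (hf : Measurable f) (hfpos : ∀ᵐ q ∂μ, 0 < f q)
    (hg : Measurable g) (hgint : Integrable g ν) (hgnonneg : ∀ p, 0 ≤ g p)
    (hHmp : MeasurePreserving H (μ.prod ν) (μ.prod ν))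
    (hinv : ∀ᵐ x ∂(μ.prod ν), f (H x).1 * g (H x).2 = f x.1 * g x.2)
    (hh : Measurable h) (hk : Measurable k)
    (hhL2 : ∫⁻ q, ENNReal.ofReal (h q ^ 2 / f q) ∂μ < ⊤)
    (hkL2 : ∫⁻ q, ENNReal.ofReal (k q ^ 2 / f q) ∂μ < ⊤) :
    Integrable (fun x => h (H x).1 * g (H x).2 * (k x.1 / f x.1)) (μ.prod ν) := by
  have hH := hHmp.measurable
  have hpos : ∀ᵐ x ∂(μ.prod ν), 0 < f x.1 := Measure.quasiMeasurePreserving_fst.ae hfpos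
  have hbound := (hHmp.integrable_comp_of_integrable
    (integrable_sq_div_mul_prod hf hfpos hh hhL2 hgint)).add
    (integrable_sq_div_mul_prod hf hfpos hk hkL2 hgint)
  refine hbound.mono' (by fun_prop : Measurable _).aestronglyMeasurable ?_
  filter_upwards [hpos, hHmp.quasiMeasurePreserving.ae hpos, hinv] with x hx hHx hfg
  exact abs_mul_mul_div_le_of_mul_eq hx hHx (hgnonneg _) hfg

end

theorem hmc_adjoint_operator_general
    {α β : Type*} [MeasurableSpace α] [MeasurableSpace β]
    (μ : Measure α) (ν : Measure β) [SigmaFinite μ] [SigmaFinite ν]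
    (f : α → ℝ) (hf : Measurable f) (hfpos : ∀ᵐ q ∂μ, 0 < f q)
    (g : β → ℝ) (hg : Measurable g) (hgnonneg : ∀ p, 0 ≤ g p)
    (hgI : ∫ p, g p ∂ν = 1)
    (H : α × β → α × β)
    (hHmp : MeasurePreserving H (μ.prod ν) (μ.prod ν))
    (hinv : ∀ᵐ x ∂(μ.prod ν), f (H x).1 * g (H x).2 = f x.1 * g x.2)
    (Hinv : α × β → α × β) (hHinvmeas : Measurable Hinv)
    (hleft : Function.LeftInverse Hinv H)
    (h k : α → ℝ) (hh : Measurable h) (hk : Measurable k)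
    (hhL2 : ∫⁻ q, ENNReal.ofReal (h q ^ 2 / f q) ∂μ < ⊤)
    (hkL2 : ∫⁻ q, ENNReal.ofReal (k q ^ 2 / f q) ∂μ < ⊤) :
    ∫ q, (∫ p, h (H (q, p)).1 * g (H (q, p)).2 ∂ν) * k q / f q ∂μ
      = ∫ q, h q * (∫ p, k (Hinv (q, p)).1 * g (Hinv (q, p)).2 ∂ν) / f q ∂μ := by
  set Φ := fun x : α × β => h (H x).1 * g (H x).2 * (k x.1 / f x.1)
  set Ψ := fun x : α × β => k (Hinv x).1 * g (Hinv x).2 * (h x.1 / f x.1)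
  have hpos : ∀ᵐ x ∂(μ.prod ν), 0 < f x.1 := Measure.quasiMeasurePreserving_fst.ae hfpos
  have hΦΨ : Φ =ᵐ[μ.prod ν] Ψ ∘ H := by
    filter_upwards [hpos, hHmp.quasiMeasurePreserving.ae hpos, hinv] with x hx hHx hfg
    simp only [Φ, Ψ, Function.comp, hleft x]
    exact mul_mul_div_eq_of_mul_eq hx hHx hfg
  have hΦ : Integrable Φ (μ.prod ν) := integrable_transfer_integrand hf hfpos hg
    (.of_integral_ne_zero (hgI ▸ one_ne_zero)) hgnonneg hHmp hinv hh hk hhL2 hkL2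
  have hΨm : Measurable Ψ := by fun_prop
  have hΨ : Integrable Ψ (μ.prod ν) :=
    (hHmp.integrable_comp hΨm.aestronglyMeasurable).1 (hΦ.congr hΦΨ)
  calc
    _ = ∫ x, Φ x ∂(μ.prod ν) := by
      simp_rw [mul_div_assoc]
      exact (integral_prod_mul_fst (φ := fun x => h (H x).1 * g (H x).2)
        (c := fun q => k q / f q) hΦ).symm
    _ = ∫ x, Ψ (H x) ∂(μ.prod ν) := integral_congr_ae hΦΨ
    _ = ∫ x, Ψ x ∂(μ.prod ν) := by
      rw [← integral_map hHmp.aemeasurable hΨm.aestronglyMeasurable, hHmp.map_eq]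
    _ = _ := by
      rw [integral_prod_mul_fst (φ := fun x => k (Hinv x).1 * g (Hinv x).2)
        (c := fun q => h q / f q) hΨ]
      congr 1 with q
      ring

/-- In the HMC setting, the operator `T†` defined by the inverse motion
`H⁻¹` is adjoint to `T` with respect to the weighted inner product
`⟨a,b⟩ = ∫ a b / f dμ`: for all measurable `h, k` with finite weighted `L²` norms,
`⟨T h, k⟩ = ⟨h, T† k⟩`. -/
theorem hmc_adjoint_operator
    {α β : Type*} [MeasurableSpace α] [MeasurableSpace β]
    (μ : Measure α) (ν : Measure β) [SigmaFinite μ] [SigmaFinite ν]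
    (f : α → ℝ) (hf : Measurable f) (hfpos : ∀ᵐ q ∂μ, 0 < f q)
    (hfint : Integrable f μ) (hfI : 0 < ∫ q, f q ∂μ)
    (g : β → ℝ) (hg : Measurable g) (hgnonneg : ∀ p, 0 ≤ g p)
    (hgI : ∫ p, g p ∂ν = 1)
    (H : α × β → α × β) (hHmeas : Measurable H) (hHbij : Function.Bijective H)
    (hHmp : MeasurePreserving H (μ.prod ν) (μ.prod ν))
    (hinv : ∀ᵐ x ∂(μ.prod ν), f (H x).1 * g (H x).2 = f x.1 * g x.2)
    (Hinv : α × β → α × β) (hHinvmeas : Measurable Hinv)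
    (hleft : Function.LeftInverse Hinv H) (hright : Function.RightInverse Hinv H)
    (h k : α → ℝ) (hh : Measurable h) (hk : Measurable k)
    (hhL2 : ∫⁻ q, ENNReal.ofReal (h q ^ 2 / f q) ∂μ < ⊤)
    (hkL2 : ∫⁻ q, ENNReal.ofReal (k q ^ 2 / f q) ∂μ < ⊤) :
    ∫ q, (∫ p, h (H (q, p)).1 * g (H (q, p)).2 ∂ν) * k q / f q ∂μ
      = ∫ q, h q * (∫ p, k (Hinv (q, p)).1 * g (Hinv (q, p)).2 ∂ν) / f q ∂μ :=
  hmc_adjoint_operator_general μ ν f hf hfpos g hg hgnonneg hgI H hHmp hinv Hinv hHinvmeas hleft h k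
    hh hk hhL2 hkL2
end

section
/- In the HMC setting, suppose τ : 𝐏 → 𝐏 is a measurable involution (τ ∘ τ = id) preserving the measure ν, that g is τ-invariant (g ∘ τ = g ν-a.e.), and that, extending τ to 𝐐 × 𝐏 by τ(q,p) = (q, τ(p)), one has τ ∘ H⁻¹ ∘ τ = H. Then T equals the adjoint operator T† defined via H⁻¹: for every measurable h with ‖h‖₂ < ∞, (T h)(q) = (T† h)(q) for μ-a.e. q, where (T† h)(q) = ∫_𝐏 h(Q⁻(q,p)) g(P⁻(q,p)) dν(p) and H⁻¹(q,p) = (Q⁻(q,p), P⁻(q,p)). -/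
/-!
Conjugating `H⁻¹` by the flip `σ(q, p) = (q, τ p)` gives `H`, so `H⁻¹ = σ ∘ H ∘ σ`. In the fibre
integral defining `T† h` the inner `σ` is absorbed by the change of variables `p ↦ τ p`, which
preserves `ν`; the outer `σ` only replaces `g (P(q, p))` by `g (τ (P(q, p)))`, and these agree
almost everywhere because `H` preserves `μ ⊗ ν` and `g ∘ τ = g` holds `ν`-a.e.
-/

open MeasureTheory

theorem Function.Involutive.eq_conj_of_conj_eq {X : Type*} {σ K H : X → X}
    (hσ : Function.Involutive σ) (hK : ∀ x, σ (K (σ x)) = H x) (y : X) :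
    K y = σ (H (σ y)) := by
  rw [← hK, hσ, hσ]

namespace MeasureTheory

variable {α β E : Type*} [MeasurableSpace α] [MeasurableSpace β]
  [NormedAddCommGroup E] [NormedSpace ℝ E] {μ : Measure α} {ν : Measure β}

theorem MeasurePreserving.integral_comp_of_involutive {τ : β → β}
    (hτ : MeasurePreserving τ ν ν) (hinvol : Function.Involutive τ) (F : β → E) :
    ∫ p, F (τ p) ∂ν = ∫ p, F p ∂ν :=
  hτ.integral_comp (MeasurableEquiv.ofInvolutive τ hinvol hτ.measurable).measurableEmbedding F

theorem Measure.ae_integral_slice_eq_of_ae_eq [SFinite ν] {F G : α × β → E}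
    (hFG : ∀ᵐ x ∂μ.prod ν, F x = G x) :
    ∀ᵐ q ∂μ, ∫ p, F (q, p) ∂ν = ∫ p, G (q, p) ∂ν := by
  filter_upwards [Measure.ae_ae_of_ae_prod hFG] with q hq
  exact integral_congr_ae hq

end MeasureTheory

theorem hmc_selfadjoint_of_involution_general
    {α β : Type*} [MeasurableSpace α] [MeasurableSpace β]
    (μ : Measure α) (ν : Measure β) [SigmaFinite ν]
    (g : β → ℝ)
    (H : α × β → α × β)
    (hHmp : MeasurePreserving H (μ.prod ν) (μ.prod ν))
    (Hinv : α × β → α × β)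
    (τ : β → β) (hτinvol : ∀ p, τ (τ p) = p)
    (hτmp : MeasurePreserving τ ν ν)
    (hgτ : ∀ᵐ p ∂ν, g (τ p) = g p)
    (hτH : ∀ x : α × β,
      ((Hinv (x.1, τ x.2)).1, τ (Hinv (x.1, τ x.2)).2) = H x)
    (h : α → ℝ) :
    ∀ᵐ q ∂μ,
      (∫ p, h (H (q, p)).1 * g (H (q, p)).2 ∂ν)
        = ∫ p, h (Hinv (q, p)).1 * g (Hinv (q, p)).2 ∂ν := by
  have hflip : Function.Involutive (Prod.map id τ : α × β → α × β) :=
    fun x => Prod.ext rfl (hτinvol x.2)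
  have hHinv (y : α × β) : Hinv y = Prod.map id τ (H (Prod.map id τ y)) :=
    hflip.eq_conj_of_conj_eq hτH y
  have hgH : ∀ᵐ x ∂μ.prod ν, g (H x).2 = g (τ (H x).2) :=
    hHmp.quasiMeasurePreserving.ae <|
      Measure.quasiMeasurePreserving_snd.ae <| hgτ.mono fun _ hp => hp.symm
  have hTdagger (q : α) : ∫ p, h (Hinv (q, p)).1 * g (Hinv (q, p)).2 ∂ν
      = ∫ p, h (H (q, p)).1 * g (τ (H (q, p)).2) ∂ν := by
    simp only [hHinv]
    exact hτmp.integral_comp_of_involutive hτinvol fun p => h (H (q, p)).1 * g (τ (H (q, p)).2)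
  have hT : ∀ᵐ x ∂μ.prod ν, h (H x).1 * g (H x).2 = h (H x).1 * g (τ (H x).2) :=
    hgH.mono fun x hx => by rw [hx]
  filter_upwards [Measure.ae_integral_slice_eq_of_ae_eq hT] with q hq
  rw [hq, hTdagger]

/-- In the HMC setting, suppose `τ : 𝐏 → 𝐏` is a measurable involution
preserving `ν`, `g` is `τ`-invariant, and (extending `τ` to `𝐐 × 𝐏` by
`τ(q,p) = (q, τ p)`) one has `τ ∘ H⁻¹ ∘ τ = H`. Then `T = T†`: for every measurable `h`
with `‖h‖₂ < ∞`, `(T h)(q) = (T† h)(q)` for `μ`-a.e. `q`. -/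
theorem hmc_selfadjoint_of_involution
    {α β : Type*} [MeasurableSpace α] [MeasurableSpace β]
    (μ : Measure α) (ν : Measure β) [SigmaFinite μ] [SigmaFinite ν]
    (f : α → ℝ) (hf : Measurable f) (hfpos : ∀ᵐ q ∂μ, 0 < f q)
    (hfint : Integrable f μ) (hfI : 0 < ∫ q, f q ∂μ)
    (g : β → ℝ) (hg : Measurable g) (hgnonneg : ∀ p, 0 ≤ g p)
    (hgI : ∫ p, g p ∂ν = 1)
    (H : α × β → α × β) (hHmeas : Measurable H) (hHbij : Function.Bijective H)
    (hHmp : MeasurePreserving H (μ.prod ν) (μ.prod ν))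
    (hinv : ∀ᵐ x ∂(μ.prod ν), f (H x).1 * g (H x).2 = f x.1 * g x.2)
    (Hinv : α × β → α × β) (hHinvmeas : Measurable Hinv)
    (hleft : Function.LeftInverse Hinv H) (hright : Function.RightInverse Hinv H)
    (τ : β → β) (hτmeas : Measurable τ) (hτinvol : ∀ p, τ (τ p) = p)
    (hτmp : MeasurePreserving τ ν ν)
    (hgτ : ∀ᵐ p ∂ν, g (τ p) = g p)
    (hτH : ∀ x : α × β,
      ((Hinv (x.1, τ x.2)).1, τ (Hinv (x.1, τ x.2)).2) = H x)
    (h : α → ℝ) (hh : Measurable h)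
    (hhL2 : ∫⁻ q, ENNReal.ofReal (h q ^ 2 / f q) ∂μ < ⊤) :
    ∀ᵐ q ∂μ,
      (∫ p, h (H (q, p)).1 * g (H (q, p)).2 ∂ν)
        = ∫ p, h (Hinv (q, p)).1 * g (Hinv (q, p)).2 ∂ν :=
  hmc_selfadjoint_of_involution_general μ ν g H hHmp Hinv τ hτinvol hτmp hgτ hτH h
end

section
/- Let E be a real Hilbert space and T : E → E a continuous linear operator that is self-adjoint (⟨T a, b⟩ = ⟨a, T b⟩ for all a, b) and a contraction (‖T x‖ ≤ ‖x‖ for all x). Let h ∈ E and suppose a subsequence T^{m_n} h converges weakly to h∞ ∈ E. Then liminf_{n→∞} ‖T^n h‖² ≤ ‖h∞‖ · limsup_{n→∞} ‖T^n h‖. -/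
/-!
The norms `‖Tⁿ h‖` decrease to a limit `L`. Self-adjointness gives
`⟪Tᵖ h, T^q h⟫ = ‖Tˢ h‖² ≥ L²` whenever `p + q = 2s`, so for every `q` one of
`⟪Tᵖ h, T^q h⟫`, `⟪Tᵖ h, T^(q+1) h⟫` is at least `L²`. Letting `p` run along the
weakly convergent subsequence gives `L² ≤ ‖h∞‖ ‖T^q h‖`, and `q → ∞` gives `L² ≤ ‖h∞‖ L`.
-/

open Filter Topology
open scoped RealInnerProductSpace

theorem antitone_norm_pow_apply {R E : Type*} [Semiring R] [SeminormedAddCommGroup E]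
    [Module R E] {T : E →ₗ[R] E} (hT : ∀ x, ‖T x‖ ≤ ‖x‖) (x : E) :
    Antitone fun n => ‖(T ^ n) x‖ :=
  antitone_nat_of_succ_le fun n => by
    rw [pow_succ', Module.End.mul_apply]
    exact hT _

namespace LinearMap.IsSymmetric

variable {E : Type*} [NormedAddCommGroup E] [InnerProductSpace ℝ E] {T : E →ₗ[ℝ] E}

theorem inner_pow_apply_pow_apply (hT : T.IsSymmetric) (x : E) {p q s : ℕ}
    (h : p + q = s + s) : ⟪(T ^ p) x, (T ^ q) x⟫ = ‖(T ^ s) x‖ ^ 2 := by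
  rw [hT.pow p, ← Module.End.mul_apply, ← pow_add, h, pow_add,
    Module.End.mul_apply, ← hT.pow s, real_inner_self_eq_norm_sq]

theorem sq_le_max_inner_pow_apply (hT : T.IsSymmetric) {x : E} {c : ℝ} (hc₀ : 0 ≤ c)
    (hc : ∀ n, c ≤ ‖(T ^ n) x‖) (p q : ℕ) :
    c ^ 2 ≤ max ⟪(T ^ p) x, (T ^ q) x⟫ ⟪(T ^ p) x, (T ^ (q + 1)) x⟫ := by
  obtain ⟨s, hs | hs⟩ := Nat.even_or_odd' (p + q)
  · rw [hT.inner_pow_apply_pow_apply x (hs.trans (two_mul s))]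
    exact le_max_of_le_left (pow_le_pow_left₀ hc₀ (hc s) 2)
  · rw [hT.inner_pow_apply_pow_apply x (q := q + 1) (s := s + 1) (by omega)]
    exact le_max_of_le_right (pow_le_pow_left₀ hc₀ (hc (s + 1)) 2)

theorem sq_le_norm_mul_norm_pow_apply (hT : T.IsSymmetric) (hT₁ : ∀ x, ‖T x‖ ≤ ‖x‖)
    {x y : E} {m : ℕ → ℕ}
    (hy : ∀ b, Tendsto (fun n => ⟪(T ^ m n) x, b⟫) atTop (𝓝 ⟪y, b⟫))
    {c : ℝ} (hc₀ : 0 ≤ c) (hc : ∀ n, c ≤ ‖(T ^ n) x‖) (q : ℕ) :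
    c ^ 2 ≤ ‖y‖ * ‖(T ^ q) x‖ := by
  have hmax : c ^ 2 ≤ max ⟪y, (T ^ q) x⟫ ⟪y, (T ^ (q + 1)) x⟫ :=
    ge_of_tendsto ((hy _).max (hy _))
      (Eventually.of_forall fun n => hT.sq_le_max_inner_pow_apply hc₀ hc (m n) q)
  have hsucc : ‖(T ^ (q + 1)) x‖ ≤ ‖(T ^ q) x‖ :=
    antitone_norm_pow_apply hT₁ x q.le_succ
  refine hmax.trans (max_le (real_inner_le_norm _ _) ?_)
  exact (real_inner_le_norm _ _).trans (by gcongr)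

theorem sq_le_norm_mul_of_tendsto_norm_pow_apply (hT : T.IsSymmetric)
    (hT₁ : ∀ x, ‖T x‖ ≤ ‖x‖) {x y : E} {m : ℕ → ℕ}
    (hy : ∀ b, Tendsto (fun n => ⟪(T ^ m n) x, b⟫) atTop (𝓝 ⟪y, b⟫))
    {L : ℝ} (hL : Tendsto (fun n => ‖(T ^ n) x‖) atTop (𝓝 L)) :
    L ^ 2 ≤ ‖y‖ * L := by
  have hL₀ : 0 ≤ L := ge_of_tendsto' hL fun _ => norm_nonneg _
  have hLle := (antitone_norm_pow_apply hT₁ x).le_of_tendsto hL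
  exact ge_of_tendsto (tendsto_const_nhds.mul hL)
    (Eventually.of_forall (hT.sq_le_norm_mul_norm_pow_apply hT₁ hy hL₀ hLle))

end LinearMap.IsSymmetric

theorem liminf_sq_le_of_weak_limit_general
    {E : Type*} [NormedAddCommGroup E] [InnerProductSpace ℝ E]
    (T : E →L[ℝ] E)
    (hsa : ∀ a b : E, ⟪T a, b⟫ = ⟪a, T b⟫)
    (hcontr : ∀ x : E, ‖T x‖ ≤ ‖x‖)
    (h hinf : E) (m : ℕ → ℕ)
    (hweak : ∀ b : E, Tendsto (fun n => ⟪(T ^ m n) h, b⟫) atTop (𝓝 ⟪hinf, b⟫)) :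
    Filter.liminf (fun n => ‖(T ^ n) h‖ ^ 2) atTop
      ≤ ‖hinf‖ * Filter.limsup (fun n => ‖(T ^ n) h‖) atTop := by
  have hpow : ∀ n, (T ^ n) h = ((T : E →ₗ[ℝ] E) ^ n) h := fun n => by
    rw [← ContinuousLinearMap.toLinearMap_pow]
    rfl
  simp only [hpow] at hweak ⊢
  have hanti := antitone_norm_pow_apply (T := (T : E →ₗ[ℝ] E)) hcontr h
  have hL := tendsto_atTop_ciInf hanti ⟨0, Set.forall_mem_range.2 fun _ => norm_nonneg _⟩
  rw [(hL.pow 2).liminf_eq, hL.limsup_eq]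
  exact LinearMap.IsSymmetric.sq_le_norm_mul_of_tendsto_norm_pow_apply hsa hcontr hweak hL

/-- Let `E` be a real Hilbert space and `T` a continuous linear
self-adjoint contraction on `E`. If a subsequence `T^{m n} h` converges weakly to
`hinf`, then `liminf ‖T^n h‖² ≤ ‖hinf‖ · limsup ‖T^n h‖`. -/
theorem liminf_sq_le_of_weak_limit
    {E : Type*} [NormedAddCommGroup E] [InnerProductSpace ℝ E] [CompleteSpace E]
    (T : E →L[ℝ] E)
    (hsa : ∀ a b : E, ⟪T a, b⟫ = ⟪a, T b⟫)
    (hcontr : ∀ x : E, ‖T x‖ ≤ ‖x‖)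
    (h hinf : E) (m : ℕ → ℕ) (hm : StrictMono m)
    (hweak : ∀ b : E, Tendsto (fun n => ⟪(T ^ m n) h, b⟫) atTop (𝓝 ⟪hinf, b⟫)) :
    Filter.liminf (fun n => ‖(T ^ n) h‖ ^ 2) atTop
      ≤ ‖hinf‖ * Filter.limsup (fun n => ‖(T ^ n) h‖) atTop :=
  liminf_sq_le_of_weak_limit_general T hsa hcontr h hinf m hweak
end

section
/- Let U, V be real d×d matrices and t ∈ ℝ, and let 𝒞 be the 2d×2d block matrix [[0, tV], [−tU, 0]]. Then the matrix exponential of 𝒞 is the block matrix exp(𝒞) = [[C₁, tV·S₂], [−tU·S₁, C₂]], where C₁ = Σ_{n≥0} (−1)ⁿ t^{2n} (VU)ⁿ/(2n)!, C₂ = Σ_{n≥0} (−1)ⁿ t^{2n} (UV)ⁿ/(2n)!, S₁ = Σ_{n≥0} (−1)ⁿ t^{2n} (VU)ⁿ/(2n+1)!, and S₂ = Σ_{n≥0} (−1)ⁿ t^{2n} (UV)ⁿ/(2n+1)! (i.e. C₁ = cos(tA), C₂ = cos(tB), S₁ = sinc(tA), S₂ = sinc(tB) for any A, B with A² = VU,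 B² = UV). -/
/-!
For `M = [[0, B], [C, 0]]` the square `M² = [[BC, 0], [0, CB]]` is block diagonal, so the even
terms `M²ᵏ/(2k)!` of the exponential series are block diagonal, with blocks `(BC)ᵏ/(2k)!` and
`(CB)ᵏ/(2k)!`, and the odd terms `M · M²ᵏ/(2k+1)!` are block antidiagonal, with blocks
`B (CB)ᵏ/(2k+1)!` and `C (BC)ᵏ/(2k+1)!`. Summing the two halves separately and substituting
`B = tV`, `C = -tU`, so that `BC = -t² VU` and `CB = -t² UV`, gives the cosine and sinc series.
-/

open Matrix NormedSpace
open scoped Nat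

theorem summable_inv_factorial_smul_pow_of_le {𝕂 𝔸 : Type*} [RCLike 𝕂] [NormedRing 𝔸]
    [NormedAlgebra 𝕂 𝔸] [CompleteSpace 𝔸] (x : 𝔸) {f : ℕ → ℕ} (hf : ∀ k, k ≤ f k) :
    Summable fun k => ((f k)! ⁻¹ : 𝕂) • x ^ k := by
  refine .of_norm_bounded (norm_expSeries_summable' (𝕂 := 𝕂) x) fun k => ?_
  rw [norm_smul, norm_smul, norm_inv, norm_inv, RCLike.norm_natCast, RCLike.norm_natCast]
  gcongr
  exact hf k

section Topology

variable {X R l m n p : Type*} [TopologicalSpace R]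

theorem HasSum.matrix_fromBlocks [AddCommMonoid R] {A : X → Matrix n l R} {B : X → Matrix n m R}
    {C : X → Matrix p l R} {D : X → Matrix p m R} {a : Matrix n l R} {b : Matrix n m R}
    {c : Matrix p l R} {d : Matrix p m R} (hA : HasSum A a) (hB : HasSum B b)
    (hC : HasSum C c) (hD : HasSum D d) :
    HasSum (fun x => fromBlocks (A x) (B x) (C x) (D x)) (fromBlocks a b c d) := by
  let L : (Matrix n l R × Matrix n m R) × (Matrix p l R × Matrix p m R) →+
      Matrix (n ⊕ p) (l ⊕ m) R :=
    { toFun q := fromBlocks q.1.1 q.1.2 q.2.1 q.2.2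
      map_zero' := fromBlocks_zero
      map_add' q r := (fromBlocks_add ..).symm }
  exact ((hA.prodMk hB).prodMk (hC.prodMk hD)).map L (by dsimp [L]; fun_prop)

theorem HasSum.matrix_mul_left [NonUnitalNonAssocSemiring R] [IsTopologicalSemiring R]
    [Fintype n] (M : Matrix m n R) {F : X → Matrix n p R} {a : Matrix n p R} (hF : HasSum F a) :
    HasSum (fun x => M * F x) (M * a) :=
  hF.map (addMonoidHomMulLeft M) (continuous_const.matrix_mul continuous_id)

end Topology

namespace Matrix

section Powers

variable {α m n : Type*} [Semiring α] [Fintype m] [Fintype n] [DecidableEq m] [DecidableEq n]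

theorem fromBlocks_zero₁₂_zero₂₁_pow (A : Matrix m m α) (D : Matrix n n α) (k : ℕ) :
    fromBlocks A 0 0 D ^ k = fromBlocks (A ^ k) 0 0 (D ^ k) := by
  induction k with
  | zero => simp [fromBlocks_one]
  | succ k ih => simp [pow_succ, ih, fromBlocks_multiply]

theorem fromBlocks_zero₁₁_zero₂₂_pow_even (B : Matrix m n α) (C : Matrix n m α) (k : ℕ) :
    fromBlocks 0 B C 0 ^ (2 * k) = fromBlocks ((B * C) ^ k) 0 0 ((C * B) ^ k) := by
  rw [pow_mul, sq, fromBlocks_multiply]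
  simpa using fromBlocks_zero₁₂_zero₂₁_pow (B * C) (C * B) k

theorem fromBlocks_zero₁₁_zero₂₂_pow_odd (B : Matrix m n α) (C : Matrix n m α) (k : ℕ) :
    fromBlocks 0 B C 0 ^ (2 * k + 1) = fromBlocks 0 (B * (C * B) ^ k) (C * (B * C) ^ k) 0 := by
  rw [_root_.pow_succ', fromBlocks_zero₁₁_zero₂₂_pow_even, fromBlocks_multiply]
  simp

end Powers

section Exp

variable {m n : Type*} [Fintype m] [Fintype n] [DecidableEq m] [DecidableEq n]

theorem summable_inv_factorial_smul_pow_of_le (x : Matrix n n ℝ) {f : ℕ → ℕ}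
    (hf : ∀ k, k ≤ f k) : Summable fun k => ((f k)! ⁻¹ : ℝ) • x ^ k := by
  let : NormedRing (Matrix n n ℝ) := Matrix.linftyOpNormedRing
  let : NormedAlgebra ℝ (Matrix n n ℝ) := Matrix.linftyOpNormedAlgebra
  exact _root_.summable_inv_factorial_smul_pow_of_le x hf

theorem exp_fromBlocks_zero₁₁_zero₂₂ (B : Matrix m n ℝ) (C : Matrix n m ℝ) :
    exp (fromBlocks 0 B C 0) =
      fromBlocks (∑' k, ((2 * k)! ⁻¹ : ℝ) • (B * C) ^ k)
        (B * ∑' k, ((2 * k + 1)! ⁻¹ : ℝ) • (C * B) ^ k)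
        (C * ∑' k, ((2 * k + 1)! ⁻¹ : ℝ) • (B * C) ^ k)
        (∑' k, ((2 * k)! ⁻¹ : ℝ) • (C * B) ^ k) := by
  have heven := HasSum.matrix_fromBlocks
    (summable_inv_factorial_smul_pow_of_le (B * C) (f := (2 * ·)) (by omega)).hasSum
    hasSum_zero hasSum_zero
    (summable_inv_factorial_smul_pow_of_le (C * B) (f := (2 * ·)) (by omega)).hasSum
  have hodd := HasSum.matrix_fromBlocks hasSum_zero
    ((summable_inv_factorial_smul_pow_of_le (C * B) (f := (2 * · + 1)) (by omega)).hasSum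
      |>.matrix_mul_left B)
    ((summable_inv_factorial_smul_pow_of_le (B * C) (f := (2 * · + 1)) (by omega)).hasSum
      |>.matrix_mul_left C)
    hasSum_zero
  have hexp := HasSum.even_add_odd (f := fun k => (k ! ⁻¹ : ℝ) • fromBlocks 0 B C 0 ^ k)
    (by simpa [fromBlocks_zero₁₁_zero₂₂_pow_even, fromBlocks_smul] using heven)
    (by simpa [fromBlocks_zero₁₁_zero₂₂_pow_odd, fromBlocks_smul] using hodd)
  rw [exp_eq_tsum ℝ]
  exact hexp.tsum_eq.trans (by simp [fromBlocks_add])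

end Exp

end Matrix

theorem inv_smul_neg_sq_smul_pow {𝔸 : Type*} [Ring 𝔸] [Algebra ℝ 𝔸] (c t : ℝ) (x : 𝔸) (k : ℕ) :
    c⁻¹ • (-t ^ 2 • x) ^ k = ((-1) ^ k * t ^ (2 * k) / c) • x ^ k := by
  rw [smul_pow, smul_smul, neg_pow, pow_mul]
  ring_nf

/-- For real `d×d` matrices `U, V` and `t ∈ ℝ`, the exponential of the
block matrix `𝒞 = [[0, tV], [−tU, 0]]` is the block matrix
`[[cos(tA), tV·sinc(tB)], [−tU·sinc(tA), cos(tB)]]`, where the entries are given by the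
power series `cos(tA) = Σ (−1)ⁿ t^{2n} (VU)ⁿ/(2n)!`, `cos(tB) = Σ (−1)ⁿ t^{2n} (UV)ⁿ/(2n)!`,
`sinc(tA) = Σ (−1)ⁿ t^{2n} (VU)ⁿ/(2n+1)!`, `sinc(tB) = Σ (−1)ⁿ t^{2n} (UV)ⁿ/(2n+1)!`
(for any `A, B` with `A² = VU`, `B² = UV`). -/
theorem exp_block_matrix_hamiltonian
    {d : ℕ} (U V : Matrix (Fin d) (Fin d) ℝ) (t : ℝ) :
    NormedSpace.exp (Matrix.fromBlocks 0 (t • V) (-(t • U)) 0) =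
      Matrix.fromBlocks
        (∑' n : ℕ, ((-1) ^ n * t ^ (2 * n) / (Nat.factorial (2 * n) : ℝ)) • (V * U) ^ n)
        (t • (V * ∑' n : ℕ,
          ((-1) ^ n * t ^ (2 * n) / (Nat.factorial (2 * n + 1) : ℝ)) • (U * V) ^ n))
        (-(t • (U * ∑' n : ℕ,
          ((-1) ^ n * t ^ (2 * n) / (Nat.factorial (2 * n + 1) : ℝ)) • (V * U) ^ n)))
        (∑' n : ℕ, ((-1) ^ n * t ^ (2 * n) / (Nat.factorial (2 * n) : ℝ)) • (U * V) ^ n) := by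
  have hVU : t • V * -(t • U) = -t ^ 2 • (V * U) := by
    rw [mul_neg, smul_mul_smul_comm, sq, neg_smul]
  have hUV : -(t • U) * (t • V) = -t ^ 2 • (U * V) := by
    rw [neg_mul, smul_mul_smul_comm, sq, neg_smul]
  rw [exp_fromBlocks_zero₁₁_zero₂₂, hVU, hUV, neg_mul, smul_mul_assoc, smul_mul_assoc]
  simp only [inv_smul_neg_sq_smul_pow]
end
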